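/- arXiv:2310.18449 — 2 statements merged into one kernel-verified Lean document; each statement's English description precedes it below -/
import Mathlib

section
/- Let C_1,...,C_r be a collection of sets covering a domain X, and let S be a sequence of n points sampled i.i.d. from a probability distribution D over X. Then the expected total probability mass of the covering sets not hit by any sample satisfies E_{S~D^n}[ Σ_{i : C_i ∩ S = ∅} P(C_i) ] ≤ r/(n·e). -/
open MeasureTheory
open scoped Classical

lemma aux_key (p : ℝ) (n : ℕ) (hn : 1 ≤ n) (hp0 : 0 ≤ p) (hp1 : p ≤ 1) :
    p * (1 - p) ^ n ≤ 1 / ((n : ℝ) * Real.exp 1) := by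
  have hpow : (1 - p) ^ n ≤ Real.exp (-(n * p)) := by
    have h1 : 1 - p ≤ Real.exp (-p) := by
      have := Real.add_one_le_exp (-p); linarith
    calc (1 - p) ^ n ≤ (Real.exp (-p)) ^ n :=
          pow_le_pow_left₀ (by linarith) h1 n
      _ = Real.exp (-(n * p)) := by
          rw [← Real.exp_nat_mul]; ring_nf
  have h2 : p * (1 - p) ^ n ≤ p * Real.exp (-(n * p)) :=
    mul_le_mul_of_nonneg_left hpow hp0
  have hne : (0:ℝ) < n := by exact_mod_cast hn
  have h3 : (n : ℝ) * p * Real.exp (-((n:ℝ) * p)) ≤ Real.exp (-1) := by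
    have hx : (n:ℝ) * p ≤ Real.exp ((n:ℝ) * p - 1) := by
      have := Real.add_one_le_exp ((n:ℝ) * p - 1); linarith
    calc (n : ℝ) * p * Real.exp (-((n:ℝ) * p))
        ≤ Real.exp ((n:ℝ) * p - 1) * Real.exp (-((n:ℝ) * p)) :=
          mul_le_mul_of_nonneg_right hx (Real.exp_pos _).le
      _ = Real.exp (-1) := by rw [← Real.exp_add]; ring_nf
  have hepos : (0:ℝ) < Real.exp 1 := Real.exp_pos 1
  have hee : Real.exp (-1) * Real.exp 1 = 1 := by rw [← Real.exp_add]; simp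
  have h4 : p * Real.exp (-((n:ℝ) * p)) ≤ 1 / ((n:ℝ) * Real.exp 1) := by
    rw [le_div_iff₀ (by positivity)]
    nlinarith [h3, hee, hepos]
  linarith

/-- Covering lemma: for covering sets `C_1,…,C_r` of a domain `X` and `n` i.i.d. samples
`S ~ D^n`, the expected total probability mass of covering sets not hit by any sample is
at most `r / (n e)`. -/
theorem stmt_0 (X : Type*) [MeasurableSpace X] (D : Measure X) [IsProbabilityMeasure D]
    (r n : ℕ) (hr : 1 ≤ r) (hn : 1 ≤ n)
    (C : Fin r → Set X) (hmeas : ∀ i, MeasurableSet (C i))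
    (hcover : (⋃ i, C i) = Set.univ) :
    ∫ S : Fin n → X,
        (∑ i ∈ Finset.univ.filter (fun i => ∀ j, S j ∉ C i), (D (C i)).toReal)
        ∂(Measure.pi fun _ : Fin n => D) ≤
      (r : ℝ) / ((n : ℝ) * Real.exp 1) := by
  classical
  set μ := (Measure.pi fun _ : Fin n => D) with hμdef
  have hAeq : ∀ i : Fin r, {S : Fin n → X | ∀ j, S j ∉ C i}
      = Set.univ.pi (fun _ => (C i)ᶜ) := by
    intro i; ext S; simp [Set.mem_pi]
  have hAm : ∀ i : Fin r, MeasurableSet {S : Fin n → X | ∀ j, S j ∉ C i} := by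
    intro i; rw [hAeq i]
    exact MeasurableSet.univ_pi (fun _ => (hmeas i).compl)
  have hrw : ∀ S : Fin n → X,
      (∑ i ∈ Finset.univ.filter (fun i => ∀ j, S j ∉ C i), (D (C i)).toReal)
      = ∑ i : Fin r,
          Set.indicator {S : Fin n → X | ∀ j, S j ∉ C i} (fun _ => (D (C i)).toReal) S := by
    intro S
    rw [Finset.sum_filter]
    refine Finset.sum_congr rfl fun i _ => ?_
    by_cases h : ∀ j, S j ∉ C i <;> simp [Set.indicator_apply, h]
  have hint : ∀ i : Fin r,
      Integrable (Set.indicator {S : Fin n → X | ∀ j, S j ∉ C i}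
        (fun _ => (D (C i)).toReal)) μ :=
    fun i => (integrable_const _).indicator (hAm i)
  calc ∫ S, (∑ i ∈ Finset.univ.filter (fun i => ∀ j, S j ∉ C i), (D (C i)).toReal) ∂μ
      = ∫ S, (∑ i : Fin r,
          Set.indicator {S : Fin n → X | ∀ j, S j ∉ C i} (fun _ => (D (C i)).toReal) S) ∂μ := by
        simp_rw [hrw]
    _ = ∑ i : Fin r, ∫ S,
          Set.indicator {S : Fin n → X | ∀ j, S j ∉ C i} (fun _ => (D (C i)).toReal) S ∂μ :=
        integral_finset_sum _ (fun i _ => hint i)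
    _ ≤ ∑ i : Fin r, 1 / ((n : ℝ) * Real.exp 1) := by
        refine Finset.sum_le_sum fun i _ => ?_
        rw [integral_indicator_const _ (hAm i)]
        have hμA : μ {S : Fin n → X | ∀ j, S j ∉ C i} = (D (C i)ᶜ) ^ n := by
          rw [hAeq i, hμdef, Measure.pi_pi]; simp
        have hcompl : D (C i)ᶜ = 1 - D (C i) := prob_compl_eq_one_sub (hmeas i)
        have hle1 : D (C i) ≤ 1 := prob_le_one
        have hpt : ((1 : ENNReal) - D (C i)).toReal = 1 - (D (C i)).toReal := by
          rw [ENNReal.toReal_sub_of_le hle1 (by simp)]; simp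
        rw [measureReal_def, hμA, hcompl, smul_eq_mul, ENNReal.toReal_pow, hpt, mul_comm]
        exact aux_key _ n hn ENNReal.toReal_nonneg
          (by rw [← ENNReal.toReal_one]; exact ENNReal.toReal_mono (by simp) hle1)
    _ = (r : ℝ) / ((n : ℝ) * Real.exp 1) := by
        rw [Finset.sum_const, Finset.card_univ, Fintype.card_fin, nsmul_eq_mul]
        ring
end

section
/- Let X be a random point sampled from a distribution D on [0,1]^d and let S be n i.i.d. samples from D, independent of X. Then the expected Euclidean distance from X to its nearest neighbor in S is at most 2·√d·n^{-1/(d+1)} (up to rounding, assuming (1/ε)^d boxes with ε = n^{-1/(d+1)} form an exact partition). -/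
open MeasureTheory ENNReal

lemma aux_t_bound (n : ℕ) (hn : 1 ≤ n) {t : ℝ} (h0 : 0 ≤ t) (h1 : t ≤ 1) :
    t * (1 - t) ^ n ≤ 1 / n := by
  have hnR : (0:ℝ) < n := by exact_mod_cast hn
  have h2 : (1 - t) ≤ Real.exp (-t) := by
    have := Real.add_one_le_exp (-t); linarith
  have h3 : (1 - t) ^ n ≤ Real.exp (-t) ^ n := pow_le_pow_left₀ (by linarith) h2 n
  have h4 : Real.exp (-t) ^ n = Real.exp (-((n:ℝ) * t)) := by
    rw [← Real.exp_nat_mul]; ring_nf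
  have h5 : (n : ℝ) * t * Real.exp (-((n:ℝ)*t)) ≤ 1 := by
    have hu : (n:ℝ)*t ≤ Real.exp ((n:ℝ)*t) := by
      have := Real.add_one_le_exp ((n:ℝ)*t); linarith
    have hepos : (0:ℝ) < Real.exp ((n:ℝ)*t) := Real.exp_pos _
    rw [Real.exp_neg, mul_inv_le_iff₀' hepos]
    linarith [hu]
  calc t * (1-t)^n ≤ t * Real.exp (-((n:ℝ)*t)) := by
        have := h3.trans_eq h4
        exact mul_le_mul_of_nonneg_left this h0
    _ = (1/n) * ((n:ℝ) * t * Real.exp (-((n:ℝ)*t))) := by field_simp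
    _ ≤ (1/n) * 1 := mul_le_mul_of_nonneg_left h5 (by positivity)
    _ = 1/n := mul_one _

lemma aux_norm_bound {d : ℕ} (x y : EuclideanSpace ℝ (Fin d)) {c : ℝ} (hc : 0 ≤ c)
    (h : ∀ j, |x j - y j| ≤ c) : ‖x - y‖ ≤ Real.sqrt d * c := by
  rw [EuclideanSpace.norm_eq]
  have hb : ∀ j : Fin d, ‖(x - y) j‖ ^ 2 ≤ c ^ 2 := by
    intro j
    have h1 : ‖(x - y) j‖ = |x j - y j| := by
      show ‖x j - y j‖ = _; exact Real.norm_eq_abs _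
    rw [h1]
    exact pow_le_pow_left₀ (abs_nonneg _) (h j) 2
  calc Real.sqrt (∑ j, ‖(x - y) j‖ ^ 2) ≤ Real.sqrt (∑ _j : Fin d, c ^ 2) :=
        Real.sqrt_le_sqrt (Finset.sum_le_sum fun j _ => hb j)
    _ = Real.sqrt ((d : ℝ) * c ^ 2) := by
        rw [Finset.sum_const, Finset.card_univ, Fintype.card_fin, nsmul_eq_mul]
    _ = Real.sqrt d * c := by
        rw [Real.sqrt_mul (Nat.cast_nonneg d), Real.sqrt_sq hc]

/-- Expected nearest-neighbor distance: for `X ~ D` on `[0,1]^d` and `S = (x_1,…,x_n)`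
i.i.d. from `D` independent of `X`, `E[min_{x'∈S} ‖X - x'‖₂] ≤ 2 √d n^{-1/(d+1)}`
(assuming `ε = n^{-1/(d+1)}` gives an exact partition into `(1/ε)^d` boxes). -/
theorem stmt_5 (d n : ℕ) (hd : 1 ≤ d) (hn : 1 ≤ n)
    (D : Measure (EuclideanSpace ℝ (Fin d))) [IsProbabilityMeasure D]
    (hsupp : D {x | ∀ j, 0 ≤ x j ∧ x j ≤ 1} = 1)
    (hexact : ∃ m : ℕ, 1 ≤ m ∧ (m : ℝ) = (n : ℝ) ^ ((1 : ℝ) / (d + 1))) :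
    ∫ p : EuclideanSpace ℝ (Fin d) × (Fin n → EuclideanSpace ℝ (Fin d)),
        (Finset.univ.inf' (⟨⟨0, hn⟩, Finset.mem_univ _⟩ : (Finset.univ : Finset (Fin n)).Nonempty) fun j => ‖p.1 - p.2 j‖)
        ∂(D.prod (Measure.pi fun _ : Fin n => D)) ≤
      2 * Real.sqrt d * (n : ℝ) ^ (-(1 : ℝ) / (d + 1)) := by
  classical
  obtain ⟨m, hm1, hm⟩ := hexact
  have hm0 : (0:ℝ) < m := by exact_mod_cast hm1
  have hn0 : (0:ℝ) < n := by exact_mod_cast hn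
  have hd1 : (0:ℝ) < (d:ℝ) + 1 := by positivity
  -- n = m^(d+1) as reals
  have hnm : (m:ℝ) ^ (d+1) = n := by
    rw [hm, ← Real.rpow_natCast ((n:ℝ) ^ ((1:ℝ)/(d+1))) (d+1),
        ← Real.rpow_mul (Nat.cast_nonneg n)]
    push_cast
    rw [one_div_mul_cancel (ne_of_gt hd1), Real.rpow_one]
  have hε : (n:ℝ) ^ (-(1:ℝ)/(d+1)) = 1/m := by
    have hneg : (-(1:ℝ))/((d:ℝ)+1) = -((1:ℝ)/((d:ℝ)+1)) := by ring
    rw [hneg, Real.rpow_neg (Nat.cast_nonneg n), ← hm, one_div]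
  -- notation
  set E := EuclideanSpace ℝ (Fin d) with hE
  set μ := D.prod (Measure.pi fun _ : Fin n => D) with hμ
  set K : Set E := {x | ∀ j, 0 ≤ x j ∧ x j ≤ 1} with hKdef
  have hK : MeasurableSet K := by
    have : K = ⋂ j, ({x : E | 0 ≤ x j} ∩ {x : E | x j ≤ 1}) := by
      ext x; simp [hKdef, Set.mem_iInter, forall_and]
    rw [this]
    have hev : ∀ j : Fin d, Measurable fun x : E => x j := fun j => (measurable_pi_apply j).comp (WithLp.measurable_ofLp 2 _)
    exact MeasurableSet.iInter fun j =>
      (measurableSet_le measurable_const (hev j)).inter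
        (measurableSet_le (hev j) measurable_const)
  -- the box map
  have hmlt : ∀ a : ℕ, min a (m-1) < m := fun a => by omega
  set B : E → (Fin d → Fin m) := fun x j => ⟨min (⌊(m:ℝ) * x j⌋₊) (m-1), hmlt _⟩ with hBdef
  have hBmeas : Measurable B := by
    apply measurable_pi_lambda
    intro j
    have h1 : Measurable fun x : E => (⌊(m:ℝ) * x j⌋₊ : ℕ) :=
      (measurable_const.mul ((measurable_pi_apply j).comp (WithLp.measurable_ofLp 2 _))).nat_floor
    exact (measurable_from_top (f := fun a : ℕ => (⟨min a (m-1), hmlt a⟩ : Fin m))).comp h1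
  -- box coordinates bracket
  have hbox : ∀ t : ℝ, 0 ≤ t → t ≤ 1 →
      ((min (⌊(m:ℝ)*t⌋₊) (m-1) : ℕ) : ℝ) ≤ (m:ℝ)*t ∧ (m:ℝ)*t ≤ ((min (⌊(m:ℝ)*t⌋₊) (m-1) : ℕ) : ℝ) + 1 := by
    intro t h0 h1
    have hmt0 : 0 ≤ (m:ℝ)*t := by positivity
    have hmtm : (m:ℝ)*t ≤ m := by nlinarith
    by_cases hcase : ⌊(m:ℝ)*t⌋₊ ≤ m-1
    · rw [min_eq_left hcase]
      exact ⟨Nat.floor_le hmt0, le_of_lt (Nat.lt_floor_add_one _)⟩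
    · rw [min_eq_right (le_of_not_ge hcase)]
      have hfloor : m ≤ ⌊(m:ℝ)*t⌋₊ := by omega
      have hge : (m:ℝ) ≤ (m:ℝ)*t := by
        exact_mod_cast (Nat.le_floor_iff hmt0).mp hfloor
      have hcast : ((m-1 : ℕ) : ℝ) = (m:ℝ) - 1 := by
        push_cast [Nat.cast_sub hm1]; ring
      rw [hcast]
      constructor <;> linarith
  -- same box ⇒ close
  have hsame : ∀ x y : E, x ∈ K → y ∈ K → B x = B y → ‖x - y‖ ≤ Real.sqrt d * (1/m) := by
    intro x y hx hy hB
    apply aux_norm_bound x y (by positivity)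
    intro j
    have hk : (min (⌊(m:ℝ) * x j⌋₊) (m-1) : ℕ) = (min (⌊(m:ℝ) * y j⌋₊) (m-1) : ℕ) := by
      have := congrFun hB j
      simpa [hBdef, Fin.ext_iff] using this
    obtain ⟨hx1, hx2⟩ := hbox (x j) (hx j).1 (hx j).2
    obtain ⟨hy1, hy2⟩ := hbox (y j) (hy j).1 (hy j).2
    rw [hk] at hx1 hx2
    have habs : |(m:ℝ)*x j - (m:ℝ)*y j| ≤ 1 := by
      rw [abs_le]; constructor <;> linarith
    have heq : |x j - y j| = |(m:ℝ)*x j - (m:ℝ)*y j| / m := by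
      rw [← mul_sub, abs_mul, abs_of_pos hm0]
      field_simp
    rw [heq]
    gcongr
  -- both in cube ⇒ distance ≤ √d
  have hcube : ∀ x y : E, x ∈ K → y ∈ K → ‖x - y‖ ≤ Real.sqrt d * 1 := by
    intro x y hx hy
    apply aux_norm_bound x y zero_le_one
    intro j
    rw [abs_le]
    constructor <;> [linarith [(hx j).1, (hx j).2, (hy j).1, (hy j).2];
      linarith [(hx j).1, (hx j).2, (hy j).1, (hy j).2]]
  -- bad event
  set A : Set (E × (Fin n → E)) :=
    ⋃ k : Fin d → Fin m, (B ⁻¹' {k}) ×ˢ {s : Fin n → E | ∀ j, B (s j) ≠ k} with hAdef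
  have hTmeas : ∀ k : Fin d → Fin m, MeasurableSet {s : Fin n → E | ∀ j, B (s j) ≠ k} := by
    intro k
    have : {s : Fin n → E | ∀ j, B (s j) ≠ k} = ⋂ j, (fun s : Fin n → E => s j) ⁻¹' (B ⁻¹' {k})ᶜ := by
      ext s; simp [Set.mem_iInter]
    rw [this]
    exact MeasurableSet.iInter fun j =>
      (measurable_pi_apply j) ((hBmeas (measurableSet_singleton k)).compl)
  have hAmeas : MeasurableSet A :=
    MeasurableSet.iUnion fun k =>
      (hBmeas (measurableSet_singleton k)).prod (hTmeas k)
  -- the good event has full measure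
  set G : Set (E × (Fin n → E)) := K ×ˢ (Set.univ.pi fun _ : Fin n => K) with hGdef
  have hGpi : MeasurableSet (Set.univ.pi fun _ : Fin n => K) :=
    MeasurableSet.univ_pi fun _ => hK
  have hGmeas : MeasurableSet G := hK.prod hGpi
  have hG1 : μ G = 1 := by
    rw [hGdef, hμ, Measure.prod_prod, Measure.pi_pi]
    simp [hsupp, ← hKdef]
  have hGc : μ Gᶜ = 0 := by
    have := measure_compl hGmeas (by rw [hG1]; exact ENNReal.one_ne_top)
    rw [hG1, measure_univ] at this
    simpa using this
  -- pointwise bound on G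
  have hptwise : ∀ p ∈ G,
      (Finset.univ.inf' (⟨⟨0, hn⟩, Finset.mem_univ _⟩ : (Finset.univ : Finset (Fin n)).Nonempty)
        fun j => ‖p.1 - p.2 j‖) ≤
      Real.sqrt d * (1/m) + A.indicator (fun _ => Real.sqrt d) p := by
    intro p hp
    obtain ⟨hp1, hp2⟩ := hp
    have hp2' : ∀ j, p.2 j ∈ K := fun j => hp2 j (Set.mem_univ j)
    by_cases hex : ∃ j, B (p.2 j) = B p.1
    · obtain ⟨j, hj⟩ := hex
      have h1 := Finset.inf'_le (fun j => ‖p.1 - p.2 j‖) (Finset.mem_univ j)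
      have h2 : ‖p.1 - p.2 j‖ ≤ Real.sqrt d * (1/m) := hsame p.1 (p.2 j) hp1 (hp2' j) hj.symm
      have h3 : 0 ≤ A.indicator (fun _ => Real.sqrt d) p :=
        Set.indicator_nonneg (fun _ _ => Real.sqrt_nonneg _) _
      linarith
    · push_neg at hex
      have hmem : p ∈ A := by
        rw [hAdef]
        exact Set.mem_iUnion.mpr ⟨B p.1, Set.mem_prod.mpr ⟨rfl, fun j => hex j⟩⟩
      have hind : A.indicator (fun _ => Real.sqrt d) p = Real.sqrt d :=
        Set.indicator_of_mem hmem _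
      have h1 := Finset.inf'_le (fun j => ‖p.1 - p.2 j‖) (Finset.mem_univ (⟨0, hn⟩ : Fin n))
      have h2 : ‖p.1 - p.2 ⟨0, hn⟩‖ ≤ Real.sqrt d * 1 := hcube _ _ hp1 (hp2' _)
      have h3 : 0 ≤ Real.sqrt d * (1/m) := by positivity
      rw [hind]
      linarith
  -- a.e. bound
  have hae : ∀ᵐ p ∂μ,
      (Finset.univ.inf' (⟨⟨0, hn⟩, Finset.mem_univ _⟩ : (Finset.univ : Finset (Fin n)).Nonempty)
        fun j => ‖p.1 - p.2 j‖) ≤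
      Real.sqrt d * (1/m) + A.indicator (fun _ => Real.sqrt d) p := by
    rw [ae_iff]
    refine measure_mono_null (fun p hp => ?_) hGc
    by_contra hpg
    exact hp (hptwise p (not_not.mp hpg))
  -- integrability
  have hFcont : Continuous (fun p : E × (Fin n → E) =>
      (Finset.univ.inf' (⟨⟨0, hn⟩, Finset.mem_univ _⟩ : (Finset.univ : Finset (Fin n)).Nonempty)
        fun j => ‖p.1 - p.2 j‖)) := by
    have h2j : ∀ j : Fin n, Continuous fun p : E × (Fin n → E) => p.2 j := fun j =>
      (continuous_apply j).comp continuous_snd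
    apply Continuous.finset_inf'_apply
    intro j _
    exact (continuous_fst.sub (h2j j)).norm
  have hFbound : ∀ᵐ p ∂μ, ‖(Finset.univ.inf'
      (⟨⟨0, hn⟩, Finset.mem_univ _⟩ : (Finset.univ : Finset (Fin n)).Nonempty)
        fun j => ‖p.1 - p.2 j‖)‖ ≤ Real.sqrt d := by
    rw [ae_iff]
    refine measure_mono_null (fun p hp => ?_) hGc
    by_contra hpg
    apply hp
    have hpG := not_not.mp hpg
    obtain ⟨hp1, hp2⟩ := hpG
    have hp2' : ∀ j, p.2 j ∈ K := fun j => hp2 j (Set.mem_univ j)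
    have h1 := Finset.inf'_le (fun j => ‖p.1 - p.2 j‖) (Finset.mem_univ (⟨0, hn⟩ : Fin n))
    have h2 : ‖p.1 - p.2 ⟨0, hn⟩‖ ≤ Real.sqrt d * 1 := hcube _ _ hp1 (hp2' _)
    have h3 : 0 ≤ Finset.univ.inf'
        (⟨⟨0, hn⟩, Finset.mem_univ _⟩ : (Finset.univ : Finset (Fin n)).Nonempty)
        fun j => ‖p.1 - p.2 j‖ := by
      apply Finset.le_inf'
      intro j _
      exact norm_nonneg _
    rw [Real.norm_eq_abs, abs_le]
    constructor <;> linarith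
  have hFint : Integrable (fun p : E × (Fin n → E) =>
      (Finset.univ.inf' (⟨⟨0, hn⟩, Finset.mem_univ _⟩ : (Finset.univ : Finset (Fin n)).Nonempty)
        fun j => ‖p.1 - p.2 j‖)) μ :=
    ⟨hFcont.aestronglyMeasurable, HasFiniteIntegral.of_bounded hFbound⟩
  have hgint : Integrable (fun p : E × (Fin n → E) =>
      Real.sqrt d * (1/m) + A.indicator (fun _ => Real.sqrt d) p) μ :=
    (integrable_const _).add ((integrable_const _).indicator hAmeas)
  -- bound μ A
  have hμA : μ A ≤ ENNReal.ofReal (1/m) := by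
    calc μ A ≤ ∑' k : Fin d → Fin m, μ ((B ⁻¹' {k}) ×ˢ {s : Fin n → E | ∀ j, B (s j) ≠ k}) :=
          measure_iUnion_le _
      _ ≤ ∑' _k : Fin d → Fin m, ENNReal.ofReal (1/n) := by
          apply ENNReal.tsum_le_tsum
          intro k
          have hrect : μ ((B ⁻¹' {k}) ×ˢ {s : Fin n → E | ∀ j, B (s j) ≠ k}) =
              D (B ⁻¹' {k}) * (D ((B ⁻¹' {k})ᶜ))^n := by
            rw [hμ, Measure.prod_prod]
            congr 1
            have hTeq : {s : Fin n → E | ∀ j, B (s j) ≠ k} =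
                Set.univ.pi (fun _ : Fin n => (B ⁻¹' {k})ᶜ) := by
              ext s; simp [Set.mem_pi]
            rw [hTeq, Measure.pi_pi, Finset.prod_const, Finset.card_univ, Fintype.card_fin]
          rw [hrect]
          set t : ℝ := (D (B ⁻¹' {k})).toReal with htdef
          have ht0 : 0 ≤ t := ENNReal.toReal_nonneg
          have htle : D (B ⁻¹' {k}) ≤ 1 := prob_le_one
          have ht1 : t ≤ 1 := by
            rw [htdef]
            exact ENNReal.toReal_le_of_le_ofReal zero_le_one (by simpa using htle)
          have hq : D (B ⁻¹' {k}) = ENNReal.ofReal t :=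
            (ENNReal.ofReal_toReal (measure_ne_top _ _)).symm
          have hcpl : D ((B ⁻¹' {k})ᶜ) = ENNReal.ofReal (1 - t) := by
            rw [measure_compl (hBmeas (measurableSet_singleton k)) (measure_ne_top _ _),
                measure_univ, hq, ENNReal.ofReal_sub _ ht0, ENNReal.ofReal_one]
          rw [hq, hcpl, ← ENNReal.ofReal_pow (by linarith), ← ENNReal.ofReal_mul ht0]
          exact ENNReal.ofReal_le_ofReal (aux_t_bound n hn ht0 ht1)
      _ = (Fintype.card (Fin d → Fin m)) • ENNReal.ofReal (1/n) := by
          rw [tsum_fintype, Finset.sum_const, Finset.card_univ]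
      _ = ENNReal.ofReal (1/m) := by
          rw [Fintype.card_fun, Fintype.card_fin, Fintype.card_fin, nsmul_eq_mul]
          rw [show ((m^d : ℕ) : ENNReal) = ENNReal.ofReal ((m:ℝ)^d) by
            rw [← ENNReal.ofReal_natCast]; push_cast; ring_nf]
          rw [← ENNReal.ofReal_mul (by positivity)]
          congr 1
          have h7 : (m:ℝ)^d * m = n := by rw [← pow_succ]; exact hnm
          field_simp
          linarith [h7]
  have hμAr : (μ A).toReal ≤ 1/m :=
    ENNReal.toReal_le_of_le_ofReal (by positivity) hμA
  -- put it together
  calc ∫ p : E × (Fin n → E),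
        (Finset.univ.inf' (⟨⟨0, hn⟩, Finset.mem_univ _⟩ : (Finset.univ : Finset (Fin n)).Nonempty)
          fun j => ‖p.1 - p.2 j‖) ∂μ
      ≤ ∫ p : E × (Fin n → E),
          (Real.sqrt d * (1/m) + A.indicator (fun _ => Real.sqrt d) p) ∂μ :=
        integral_mono_ae hFint hgint hae
    _ = Real.sqrt d * (1/m) + (μ A).toReal * Real.sqrt d := by
        rw [integral_add (integrable_const _) ((integrable_const _).indicator hAmeas),
          integral_const, integral_indicator_const _ hAmeas]
        simp [measure_univ, measureReal_def]
    _ ≤ Real.sqrt d * (1/m) + (1/m) * Real.sqrt d := by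
        have := Real.sqrt_nonneg (d:ℝ)
        nlinarith
    _ = 2 * Real.sqrt d * (1/m) := by ring
    _ = 2 * Real.sqrt d * (n : ℝ) ^ (-(1 : ℝ) / (d + 1)) := by rw [hε]
end
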